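/- (Claim (⋆) in the proof of Lemma 4.3) Let S be a finite spin space and let Φ be a translation invariant, absolutely summable interaction potential on ℤ^d. Let A ⊆ Λ ⊂ ℤ^d be finite sets, β ≥ 0, λ ∈ Φ_A(Ω_A), and ω̄ ∈ Ω_{Λ∖A}. Then the conditional Gibbs probability satisfies μ_{Λ,β}( {ω : Φ_A(ω_A) = λ} | {ω : ω_{Λ∖A} = ω̄} ) ≥ c_λ(β), where c_λ(β) := #{η ∈ Ω_A : Φ_A(η) = λ} / ( e^{2β|A|‖Φ‖} · Σ_{η ∈ Ω_A} e^{−β(Φ_A(η) − λ)} ); in particular this lower bound depends on neither Λ nor ω̄. -/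

import Mathlib

/-!
Split `ω ∈ Ω_Λ` as `(η, ω̄)` with `η ∈ Ω_A`. In `H_Λ(η, ω̄)` the sets `B ⊆ Λ \ A` contribute
`H_{Λ∖A}(ω̄)`, the set `A` contributes `Φ_A(η)`, and every other set meets `A`; by translation
invariance the norms of the sets containing a given site add up to at most `‖Φ‖`, so these
remaining sets contribute at most `|A| ‖Φ‖` in absolute value. The term `H_{Λ∖A}(ω̄)` cancels
in the conditional probability, and the error changes the numerator and the denominator by a
factor of at most `e^{β|A|‖Φ‖}` each.
-/

open Filter Topology

/-- The lattice `ℤ^d`. -/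
abbrev Zd (d : ℕ) := Fin d → ℤ

/-- The configuration space `Ω_Λ = S^Λ` for a finite `Λ ⊆ ℤ^d`. -/
abbrev Config (S : Type) {d : ℕ} (Λ : Finset (Zd d)) : Type := {x // x ∈ Λ} → S

/-- Restriction of a configuration on `Λ` to a subset `A ⊆ Λ`. -/
def restrictCfg {S : Type} {d : ℕ} {Λ A : Finset (Zd d)} (h : A ⊆ Λ) (ω : Config S Λ) :
    Config S A := fun a => ω ⟨a.1, h a.2⟩

/-- An interaction potential: a function `Φ_A : Ω_A → ℝ` for each finite `A ⊆ ℤ^d`. -/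
abbrev Pot (d : ℕ) (S : Type) := (A : Finset (Zd d)) → Config S A → ℝ

/-- The sup norm `‖Φ_A‖_∞`. -/
noncomputable def potNorm {d : ℕ} {S : Type} [Fintype S] [Nonempty S] (Φ : Pot d S)
    (A : Finset (Zd d)) : ℝ := ⨆ ω : Config S A, |Φ A ω|

/-- Translate of a finite set: `A + x`. -/
def shiftSet {d : ℕ} (x : Zd d) (A : Finset (Zd d)) : Finset (Zd d) := A.image (· + x)

/-- Translation invariance of a potential. -/
def TransInv {d : ℕ} {S : Type} (Φ : Pot d S) : Prop :=
  ∀ (x : Zd d) (A : Finset (Zd d)) (ω : Config S (shiftSet x A)),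
    Φ (shiftSet x A) ω = Φ A (fun a => ω ⟨a.1 + x, Finset.mem_image_of_mem _ a.2⟩)

/-- Absolute summability: `Σ_{A ∋ 0} ‖Φ_A‖ < ∞`. -/
def AbsSummable {d : ℕ} {S : Type} [Fintype S] [Nonempty S] (Φ : Pot d S) : Prop :=
  Summable (fun A : {A : Finset (Zd d) // (0 : Zd d) ∈ A} => potNorm Φ A.1)

/-- `‖Φ‖ = Σ_{A ∋ 0} ‖Φ_A‖`. -/
noncomputable def potFullNorm {d : ℕ} {S : Type} [Fintype S] [Nonempty S] (Φ : Pot d S) : ℝ :=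
  ∑' A : {A : Finset (Zd d) // (0 : Zd d) ∈ A}, potNorm Φ A.1

/-- The Hamiltonian `H_Λ(ω) = Σ_{A ⊆ Λ} Φ_A(ω_A)`. -/
noncomputable def Ham {d : ℕ} {S : Type} (Φ : Pot d S) (Λ : Finset (Zd d))
    (ω : Config S Λ) : ℝ :=
  ∑ A ∈ Λ.powerset.attach, Φ A.1 (restrictCfg (Finset.mem_powerset.mp A.2) ω)

/-- The hypercube `Λ_n = [-n, n]^d ∩ ℤ^d`. -/
noncomputable def cube (d n : ℕ) : Finset (Zd d) := Fintype.piFinset fun _ => Finset.Icc (-(n : ℤ)) n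

/-- Energy per site `h_n(ω) = H_n(ω)/|Λ_n|`. -/
noncomputable def enDensity {d : ℕ} {S : Type} (Φ : Pot d S) (n : ℕ)
    (ω : Config S (cube d n)) : ℝ := Ham Φ (cube d n) ω / (cube d n).card

/-- `𝕄_n(B) = #{ω ∈ Ω_n : h_n(ω) ∈ B}`. -/
noncomputable def Mcount {d : ℕ} {S : Type} [Fintype S] (Φ : Pot d S) (n : ℕ)
    (B : Set ℝ) : ℕ := Nat.card {ω : Config S (cube d n) // enDensity Φ n ω ∈ B}

/-- The sequence `(1/|Λ_n|) log 𝕄_n(B)`, with the convention `log 0 = -∞`. -/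
noncomputable def mSeq {d : ℕ} {S : Type} [Fintype S] (Φ : Pot d S) (B : Set ℝ)
    (n : ℕ) : EReal :=
  if Mcount Φ n B = 0 then ⊥
  else ((Real.log (Mcount Φ n B) / (cube d n).card : ℝ) : EReal)

/-- `m(B) = lim_n (1/|Λ_n|) log 𝕄_n(B)` (defined via `limsup`; the content that this is
an actual limit is asserted in the theorems). -/
noncomputable def mFun {d : ℕ} {S : Type} [Fintype S] (Φ : Pot d S) (B : Set ℝ) : EReal :=
  Filter.limsup (mSeq Φ B) Filter.atTop

/-- The microcanonical entropy `s(u) = lim_{r→0⁺} m((u-r, u+r))` (defined via `limsup`). -/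
noncomputable def entropy {d : ℕ} {S : Type} [Fintype S] (Φ : Pot d S) (u : ℝ) : EReal :=
  Filter.limsup (fun r : ℝ => mFun Φ (Set.Ioo (u - r) (u + r))) (nhdsWithin 0 (Set.Ioi 0))

/-- The partition function `Z_{Λ,β}`. -/
noncomputable def Zfun {d : ℕ} {S : Type} [Fintype S] (Φ : Pot d S) (Λ : Finset (Zd d))
    (β : ℝ) : ℝ := ∑ ω : Config S Λ, Real.exp (-β * Ham Φ Λ ω)

/-- The finite-volume pressure `ψ_Λ(β) = -(1/|Λ|) log Z_{Λ,β}`. -/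
noncomputable def pressureFin {d : ℕ} {S : Type} [Fintype S] (Φ : Pot d S)
    (Λ : Finset (Zd d)) (β : ℝ) : ℝ := -Real.log (Zfun Φ Λ β) / Λ.card

/-- The pressure sequence `-(1/|Λ_n|) log Z_{Λ_n,β}`. -/
noncomputable def pressureSeq {d : ℕ} {S : Type} [Fintype S] (Φ : Pot d S) (β : ℝ)
    (n : ℕ) : ℝ := pressureFin Φ (cube d n) β

/-- Gibbs expectation `⟨f⟩_{Λ,β}`. -/
noncomputable def gibbsExp {d : ℕ} {S : Type} [Fintype S] (Φ : Pot d S)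
    (Λ : Finset (Zd d)) (β : ℝ) (f : Config S Λ → ℝ) : ℝ :=
  (∑ ω : Config S Λ, f ω * Real.exp (-β * Ham Φ Λ ω)) / Zfun Φ Λ β

/-- Gibbs variance `Var_{Λ,β}(f)`. -/
noncomputable def gibbsVar {d : ℕ} {S : Type} [Fintype S] (Φ : Pot d S)
    (Λ : Finset (Zd d)) (β : ℝ) (f : Config S Λ → ℝ) : ℝ :=
  gibbsExp Φ Λ β (fun ω => (f ω) ^ 2) - (gibbsExp Φ Λ β f) ^ 2

/-- Gibbs covariance `Cov_{Λ,β}(f,g)`. -/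
noncomputable def gibbsCov {d : ℕ} {S : Type} [Fintype S] (Φ : Pot d S)
    (Λ : Finset (Zd d)) (β : ℝ) (f g : Config S Λ → ℝ) : ℝ :=
  gibbsExp Φ Λ β (fun ω => f ω * g ω) - gibbsExp Φ Λ β f * gibbsExp Φ Λ β g

/-- Gibbs probability `μ_{Λ,β}(E)`. -/
noncomputable def gibbsProb {d : ℕ} {S : Type} [Fintype S] (Φ : Pot d S)
    (Λ : Finset (Zd d)) (β : ℝ) (E : Set (Config S Λ)) : ℝ :=
  (∑ ω : Config S Λ, E.indicator (fun ω => Real.exp (-β * Ham Φ Λ ω)) ω) / Zfun Φ Λ β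

/-- Positive correlation of the potential. -/
def PosCorr {d : ℕ} {S : Type} [Fintype S] (Φ : Pot d S) : Prop :=
  ∀ (Λ A B : Finset (Zd d)) (hA : A ⊆ Λ) (hB : B ⊆ Λ) (β : ℝ), 0 < β →
    0 ≤ gibbsCov Φ Λ β (fun ω => Φ A (restrictCfg hA ω)) (fun ω => Φ B (restrictCfg hB ω))

/-- `#M_n(u) = #{ω ∈ Ω_n : H_n(ω) ≤ |Λ_n| u}`. -/
noncomputable def MvolCount {d : ℕ} {S : Type} [Fintype S] (Φ : Pot d S) (n : ℕ)
    (u : ℝ) : ℕ :=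
  Nat.card {ω : Config S (cube d n) // Ham Φ (cube d n) ω ≤ (cube d n).card * u}

/-- The sequence `(1/|Λ_n|) log #M_n(u)`, with the convention `log 0 = -∞`. -/
noncomputable def sigmaSeq {d : ℕ} {S : Type} [Fintype S] (Φ : Pot d S) (u : ℝ)
    (n : ℕ) : EReal :=
  if MvolCount Φ n u = 0 then ⊥
  else ((Real.log (MvolCount Φ n u) / (cube d n).card : ℝ) : EReal)

/-- `σ(u) = lim_n (1/|Λ_n|) log #M_n(u)` (defined via `limsup`). -/
noncomputable def sigmaFun {d : ℕ} {S : Type} [Fintype S] (Φ : Pot d S) (u : ℝ) : EReal :=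
  Filter.limsup (sigmaSeq Φ u) Filter.atTop

section PotentialNorm

variable {d : ℕ} {S : Type} [Fintype S] [Nonempty S] (Φ : Pot d S)

lemma potNorm_nonneg (A : Finset (Zd d)) : 0 ≤ potNorm Φ A :=
  Real.iSup_nonneg fun _ => abs_nonneg _

lemma abs_le_potNorm (A : Finset (Zd d)) (ω : Config S A) : |Φ A ω| ≤ potNorm Φ A :=
  le_ciSup (Set.finite_range fun ω : Config S A => |Φ A ω|).bddAbove ω

omit [Fintype S] [Nonempty S] in
lemma shiftSet_shiftSet_neg (x : Zd d) (A : Finset (Zd d)) :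
    shiftSet x (shiftSet (-x) A) = A := by
  ext z
  simp [shiftSet]

lemma potNorm_shiftSet (hTI : TransInv Φ) (x : Zd d) (A : Finset (Zd d)) :
    potNorm Φ (shiftSet x A) = potNorm Φ A := by
  refine le_antisymm (ciSup_le fun ω => ?_) (ciSup_le fun η => ?_)
  · rw [hTI]
    exact abs_le_potNorm Φ A _
  · have hmem : ∀ b : {z // z ∈ shiftSet x A}, b.1 - x ∈ A := by
      rintro ⟨_, hb⟩
      obtain ⟨a, ha, rfl⟩ := Finset.mem_image.mp hb
      simpa using ha
    have hη : Φ A η = Φ (shiftSet x A) fun b => η ⟨b.1 - x, hmem b⟩ := by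
      rw [hTI]
      simp
    rw [hη]
    exact abs_le_potNorm Φ _ _

/-- Translating every set to the origin turns the sum into a partial sum of the series `‖Φ‖`. -/
lemma sum_potNorm_le_potFullNorm_of_forall_mem (hTI : TransInv Φ) (hAS : AbsSummable Φ)
    (x : Zd d) (𝒯 : Finset (Finset (Zd d))) (h𝒯 : ∀ B ∈ 𝒯, x ∈ B) :
    ∑ B ∈ 𝒯, potNorm Φ B ≤ potFullNorm Φ := by
  have hinj : Set.InjOn (shiftSet (-x)) 𝒯 := fun B₁ _ B₂ _ h => by
    rw [← shiftSet_shiftSet_neg x B₁, h, shiftSet_shiftSet_neg]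
  have hzero : ∀ C ∈ 𝒯.image (shiftSet (-x)), (0 : Zd d) ∈ C := by
    intro C hC
    obtain ⟨B, hB, rfl⟩ := Finset.mem_image.mp hC
    exact Finset.mem_image.mpr ⟨x, h𝒯 B hB, by simp⟩
  calc ∑ B ∈ 𝒯, potNorm Φ B = ∑ C ∈ 𝒯.image (shiftSet (-x)), potNorm Φ C := by
        rw [Finset.sum_image hinj]
        refine Finset.sum_congr rfl fun B _ => ?_
        rw [← potNorm_shiftSet Φ hTI x (shiftSet (-x) B), shiftSet_shiftSet_neg]
    _ = ∑ C ∈ (𝒯.image (shiftSet (-x))).subtype (fun C => (0 : Zd d) ∈ C), potNorm Φ C.1 := by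
        rw [Finset.sum_subtype_eq_sum_filter, Finset.filter_true_of_mem hzero]
    _ ≤ potFullNorm Φ := hAS.sum_le_tsum _ fun _ _ => potNorm_nonneg Φ _

lemma sum_potNorm_le_card_mul_potFullNorm (hTI : TransInv Φ) (hAS : AbsSummable Φ)
    (A : Finset (Zd d)) (𝒯 : Finset (Finset (Zd d))) (h𝒯 : ∀ B ∈ 𝒯, ¬Disjoint B A) :
    ∑ B ∈ 𝒯, potNorm Φ B ≤ A.card * potFullNorm Φ := by
  calc ∑ B ∈ 𝒯, potNorm Φ B ≤ ∑ B ∈ 𝒯, ∑ x ∈ A, if x ∈ B then potNorm Φ B else 0 := by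
        refine Finset.sum_le_sum fun B hB => ?_
        obtain ⟨x, hxB, hxA⟩ := Finset.not_disjoint_iff.mp (h𝒯 B hB)
        refine le_trans (le_of_eq (if_pos hxB).symm)
          (Finset.single_le_sum (f := fun x => if x ∈ B then potNorm Φ B else 0) ?_ hxA)
        intro y _
        split_ifs <;> simp [potNorm_nonneg]
    _ = ∑ x ∈ A, ∑ B ∈ 𝒯 with x ∈ B, potNorm Φ B := by
        rw [Finset.sum_comm]
        simp only [Finset.sum_filter]
    _ ≤ ∑ _x ∈ A, potFullNorm Φ := Finset.sum_le_sum fun x _ =>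
        sum_potNorm_le_potFullNorm_of_forall_mem Φ hTI hAS x _ fun _ hB =>
          (Finset.mem_filter.mp hB).2
    _ = A.card * potFullNorm Φ := by rw [Finset.sum_const, nsmul_eq_mul]

end PotentialNorm

section Hamiltonian

variable {d : ℕ} {S : Type} (Φ : Pot d S) {Λ : Finset (Zd d)}

/-- The term `Φ_B(ω_B)` of `H_Λ(ω)`, set to `0` when `B ⊄ Λ` so that it does not depend on a
proof of `B ⊆ Λ`. -/
noncomputable def hamTerm (ω : Config S Λ) (B : Finset (Zd d)) : ℝ :=
  if h : B ⊆ Λ then Φ B (restrictCfg h ω) else 0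

lemma ham_eq_sum_hamTerm (ω : Config S Λ) :
    Ham Φ Λ ω = ∑ B ∈ Λ.powerset, hamTerm Φ ω B := by
  rw [Ham, ← Finset.sum_attach Λ.powerset]
  refine Finset.sum_congr rfl fun B _ => ?_
  rw [hamTerm, dif_pos (Finset.mem_powerset.mp B.2)]

lemma ham_sdiff_restrictCfg_eq_sum_hamTerm {A : Finset (Zd d)} (ω : Config S Λ) :
    Ham Φ (Λ \ A) (restrictCfg Finset.sdiff_subset ω) =
      ∑ B ∈ Λ.powerset with Disjoint B A, hamTerm Φ ω B := by
  have hpow : (Λ \ A).powerset = Λ.powerset.filter (Disjoint · A) := by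
    ext B
    simp [Finset.subset_sdiff]
  rw [ham_eq_sum_hamTerm, hpow]
  refine Finset.sum_congr rfl fun B hB => ?_
  have hBΛA : B ⊆ Λ \ A := Finset.subset_sdiff.mpr (by simpa using hB)
  rw [hamTerm, hamTerm, dif_pos hBΛA, dif_pos (hBΛA.trans Finset.sdiff_subset)]
  rfl

lemma abs_ham_sub_ham_sdiff_sub_le [Fintype S] [Nonempty S] (hTI : TransInv Φ)
    (hAS : AbsSummable Φ) {A : Finset (Zd d)} (hA : A.Nonempty) (hAΛ : A ⊆ Λ)
    (ω : Config S Λ) :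
    |Ham Φ Λ ω - Ham Φ (Λ \ A) (restrictCfg Finset.sdiff_subset ω) -
        Φ A (restrictCfg hAΛ ω)| ≤ A.card * potFullNorm Φ := by
  set 𝒯 := Λ.powerset.filter (¬Disjoint · A)
  have hA𝒯 : A ∈ 𝒯 := by simpa [𝒯, hAΛ] using hA.ne_empty
  have hsplit : Ham Φ Λ ω - Ham Φ (Λ \ A) (restrictCfg Finset.sdiff_subset ω) -
      Φ A (restrictCfg hAΛ ω) = ∑ B ∈ 𝒯.erase A, hamTerm Φ ω B := by
    rw [ham_eq_sum_hamTerm, ham_sdiff_restrictCfg_eq_sum_hamTerm,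
      ← Finset.sum_filter_add_sum_filter_not Λ.powerset (Disjoint · A),
      ← Finset.add_sum_erase _ _ hA𝒯, hamTerm, dif_pos hAΛ]
    ring
  have hterm : ∀ B, |hamTerm Φ ω B| ≤ potNorm Φ B := fun B => by
    unfold hamTerm
    split_ifs
    · exact abs_le_potNorm Φ B _
    · simpa using potNorm_nonneg Φ B
  rw [hsplit]
  calc |∑ B ∈ 𝒯.erase A, hamTerm Φ ω B| ≤ ∑ B ∈ 𝒯.erase A, potNorm Φ B :=
        (Finset.abs_sum_le_sum_abs _ _).trans (Finset.sum_le_sum fun B _ => hterm B)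
    _ ≤ A.card * potFullNorm Φ :=
        sum_potNorm_le_card_mul_potFullNorm Φ hTI hAS A _ fun B hB =>
          (Finset.mem_filter.mp (Finset.mem_of_mem_erase hB)).2

end Hamiltonian

section Fiber

variable {d : ℕ} {S : Type} {Λ A : Finset (Zd d)}

def glueCfg (η : Config S A) (ωbar : Config S (Λ \ A)) : Config S Λ := fun z =>
  if h : z.1 ∈ A then η ⟨z.1, h⟩ else ωbar ⟨z.1, Finset.mem_sdiff.mpr ⟨z.2, h⟩⟩

lemma restrictCfg_glueCfg (hAΛ : A ⊆ Λ) (η : Config S A) (ωbar : Config S (Λ \ A)) :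
    restrictCfg hAΛ (glueCfg η ωbar) = η := by
  funext a
  simp [restrictCfg, glueCfg, a.2]

lemma restrictCfg_sdiff_glueCfg (η : Config S A) (ωbar : Config S (Λ \ A)) :
    restrictCfg Finset.sdiff_subset (glueCfg η ωbar) = ωbar := by
  funext a
  simp [restrictCfg, glueCfg, (Finset.mem_sdiff.mp a.2).2]

lemma glueCfg_restrictCfg (hAΛ : A ⊆ Λ) (ω : Config S Λ) :
    glueCfg (restrictCfg hAΛ ω) (restrictCfg Finset.sdiff_subset ω) = ω := by
  funext z
  by_cases hz : z.1 ∈ A <;> simp [glueCfg, restrictCfg, hz]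

lemma sum_indicator_restrictCfg_eq_sum_glueCfg [Fintype S] (hAΛ : A ⊆ Λ)
    (ωbar : Config S (Λ \ A)) (g : Config S Λ → ℝ) :
    ∑ ω, {ω | restrictCfg Finset.sdiff_subset ω = ωbar}.indicator g ω =
      ∑ η, g (glueCfg η ωbar) := by
  classical
  rw [Finset.sum_indicator_eq_sum_filter]
  refine Finset.sum_nbij' (restrictCfg hAΛ) (glueCfg · ωbar) (by simp)
    (fun η _ => by simpa using restrictCfg_sdiff_glueCfg η ωbar) ?_
    (fun η _ => restrictCfg_glueCfg hAΛ η ωbar) ?_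
  all_goals
    intro ω hω
    obtain rfl : restrictCfg Finset.sdiff_subset ω = ωbar := (Finset.mem_filter.mp hω).2
    rw [glueCfg_restrictCfg hAΛ]

end Fiber

open Real in
/-- The error term moves every weight `e^{-βH}` by a factor at most `e^{βK}` away from
`e^{-β(C + f)}`, once in the numerator and once in the denominator. -/
lemma card_div_le_sum_indicator_div {ι : Type*} [Fintype ι] [Nonempty ι] (f H : ι → ℝ)
    {β C K : ℝ} (lam : ℝ) (hβ : 0 ≤ β) (hH : ∀ i, |H i - C - f i| ≤ K) :
    (Nat.card {i // f i = lam} : ℝ) / (exp (2 * β * K) * ∑ i, exp (-β * (f i - lam))) ≤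
      (∑ i, {i | f i = lam}.indicator (fun i => exp (-β * H i)) i) / ∑ i, exp (-β * H i) := by
  set N : ℝ := (Nat.card {i // f i = lam} : ℝ)
  set Z : ℝ := ∑ i, exp (-β * (f i - lam))
  have hZ : 0 < Z := Finset.sum_pos (fun _ _ => exp_pos _) Finset.univ_nonempty
  have hnum : N * exp (-β * (lam + C + K)) ≤
      ∑ i, {i | f i = lam}.indicator (fun i => exp (-β * H i)) i := by
    rw [Finset.sum_indicator_eq_sum_filter]
    calc N * exp (-β * (lam + C + K)) = ∑ i with f i = lam, exp (-β * (lam + C + K)) := by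
          simp [N, Fintype.card_subtype]
      _ ≤ _ := Finset.sum_le_sum fun i hi => by
          rw [exp_le_exp, ← (Finset.mem_filter.mp hi).2]
          nlinarith [(abs_le.mp (hH i)).2]
  have hden : ∑ i, exp (-β * H i) ≤ exp (-β * (lam + C - K)) * Z := by
    rw [Finset.mul_sum]
    refine Finset.sum_le_sum fun i _ => ?_
    rw [← exp_add, exp_le_exp]
    nlinarith [(abs_le.mp (hH i)).1]
  have hfactor : exp (2 * β * K) * exp (-β * (lam + C + K)) = exp (-β * (lam + C - K)) := by
    rw [← exp_add]
    ring_nf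
  calc N / (exp (2 * β * K) * Z)
      = N * exp (-β * (lam + C + K)) / (exp (-β * (lam + C - K)) * Z) := by
        rw [← hfactor, mul_right_comm (exp (2 * β * K)), mul_div_mul_right _ _ (exp_pos _).ne']
    _ ≤ _ := div_le_div₀ (Finset.sum_nonneg fun i _ => Set.indicator_nonneg
          (fun _ _ => (exp_pos _).le) i) hnum
          (Finset.sum_pos (fun _ _ => exp_pos _) Finset.univ_nonempty) hden

theorem claim_star_general {d : ℕ} {S : Type} [Fintype S] [Nonempty S]
    (Φ : Pot d S) (hTI : TransInv Φ) (hAS : AbsSummable Φ)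
    (A Λ : Finset (Zd d)) (hA : A.Nonempty) (hAΛ : A ⊆ Λ)
    (β : ℝ) (hβ : 0 ≤ β) (lam : ℝ)
    (ωbar : Config S (Λ \ A)) :
    (Nat.card {η : Config S A // Φ A η = lam} : ℝ) /
        (Real.exp (2 * β * A.card * potFullNorm Φ) *
          ∑ η : Config S A, Real.exp (-β * (Φ A η - lam))) ≤
      gibbsProb Φ Λ β ({ω | Φ A (restrictCfg hAΛ ω) = lam} ∩
          {ω | restrictCfg (Finset.sdiff_subset) ω = ωbar}) /
        gibbsProb Φ Λ β {ω | restrictCfg (Finset.sdiff_subset) ω = ωbar} := by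
  have hZ : Zfun Φ Λ β ≠ 0 :=
    (Finset.sum_pos (fun _ _ => Real.exp_pos _) Finset.univ_nonempty).ne'
  have hnum : ∑ ω, ({ω | Φ A (restrictCfg hAΛ ω) = lam} ∩
        {ω | restrictCfg Finset.sdiff_subset ω = ωbar}).indicator
        (fun ω => Real.exp (-β * Ham Φ Λ ω)) ω =
      ∑ η, {η | Φ A η = lam}.indicator
        (fun η => Real.exp (-β * Ham Φ Λ (glueCfg η ωbar))) η := by
    rw [Set.inter_comm, ← Set.indicator_indicator, sum_indicator_restrictCfg_eq_sum_glueCfg hAΛ]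
    refine Finset.sum_congr rfl fun η _ => ?_
    simp only [Set.indicator_apply, Set.mem_ofPred_eq, restrictCfg_glueCfg]
  rw [gibbsProb, gibbsProb, div_div_div_cancel_right₀ hZ, hnum,
    sum_indicator_restrictCfg_eq_sum_glueCfg hAΛ, mul_assoc (2 * β)]
  refine card_div_le_sum_indicator_div (Φ A) (fun η => Ham Φ Λ (glueCfg η ωbar))
    (C := Ham Φ (Λ \ A) ωbar) lam hβ fun η => ?_
  simpa [restrictCfg_glueCfg, restrictCfg_sdiff_glueCfg] using
    abs_ham_sub_ham_sdiff_sub_le Φ hTI hAS hA hAΛ (glueCfg η ωbar)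

/-- **Claim (⋆) in the proof of Lemma 4.3**: the conditional Gibbs probability that
`Φ_A = λ`, given the configuration `ω̄` outside `A`, is bounded below by
`c_λ(β) = #{Φ_A = λ} / (e^{2β|A|‖Φ‖} Σ_η e^{-β(Φ_A(η) - λ)})`, which depends on
neither `Λ` nor `ω̄`. -/
theorem claim_star {d : ℕ} (hd : 0 < d) {S : Type} [Fintype S] [Nonempty S]
    (Φ : Pot d S) (hTI : TransInv Φ) (hAS : AbsSummable Φ)
    (hΦ0 : ∀ ω : Config S (∅ : Finset (Zd d)), Φ ∅ ω = 0)
    (A Λ : Finset (Zd d)) (hA : A.Nonempty) (hAΛ : A ⊆ Λ)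
    (β : ℝ) (hβ : 0 ≤ β) (lam : ℝ) (hlam : ∃ η : Config S A, Φ A η = lam)
    (ωbar : Config S (Λ \ A)) :
    (Nat.card {η : Config S A // Φ A η = lam} : ℝ) /
        (Real.exp (2 * β * A.card * potFullNorm Φ) *
          ∑ η : Config S A, Real.exp (-β * (Φ A η - lam))) ≤
      gibbsProb Φ Λ β ({ω | Φ A (restrictCfg hAΛ ω) = lam} ∩
          {ω | restrictCfg (Finset.sdiff_subset) ω = ωbar}) /
        gibbsProb Φ Λ β {ω | restrictCfg (Finset.sdiff_subset) ω = ωbar} :=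
  claim_star_general Φ hTI hAS A Λ hA hAΛ β hβ lam ωbar
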